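/- For every integer n > 2, the total graph of the path P_n on n vertices has primitive hole number h(T(P_n)) = 2n − 3. -/

import Mathlib

/-- The primitive hole number of a simple graph: the number of triangles
(3-cliques) in the graph. -/
noncomputable def SimpleGraph.holeNumber {V : Type*} (G : SimpleGraph V) : ℕ :=
  {s : Finset V | G.IsNClique 3 s}.ncard

/-- The primitive degree of a vertex: the number of triangles (3-cliques)
of the graph containing that vertex. -/
noncomputable def SimpleGraph.primDegree {V : Type*} (G : SimpleGraph V) (v : V) : ℕ :=
  {s : Finset V | G.IsNClique 3 s ∧ v ∈ s}.ncard

/-- The total graph of a simple graph `G`: vertices are the vertices and edges of `G`,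
two of them adjacent iff the corresponding elements of `G` are adjacent or incident. -/
def SimpleGraph.totalGraph {V : Type*} (G : SimpleGraph V) :
    SimpleGraph (V ⊕ G.edgeSet) where
  Adj x y :=
    match x, y with
    | Sum.inl u, Sum.inl v => G.Adj u v
    | Sum.inl u, Sum.inr e => u ∈ (e : Sym2 V)
    | Sum.inr e, Sum.inl u => u ∈ (e : Sym2 V)
    | Sum.inr e, Sum.inr f => e ≠ f ∧ ∃ v, v ∈ (e : Sym2 V) ∧ v ∈ (f : Sym2 V)
  symm := by
    constructor
    rintro (u | e) (v | f) h
    · exact G.adj_symm h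
    · exact h
    · exact h
    · exact ⟨h.1.symm, h.2.imp fun v hv => ⟨hv.2, hv.1⟩⟩
  loopless := by
    constructor
    rintro (u | e) h
    · exact G.ne_of_adj h rfl
    · exact h.1 rfl

/-!
Listing the vertices and edges of `P_n` in path order `v₀, e₀, v₁, e₁, …, v_{n-1}`, where
`eᵢ = vᵢvᵢ₊₁`, two elements are adjacent in `T(P_n)` exactly when they are at most two places
apart. So `T(P_n)` is the square of the path on `2n - 1` vertices, whose triangles are the
`2n - 3` windows `{k, k + 1, k + 2}` of three consecutive vertices.
-/

namespace SimpleGraph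

theorem holeNumber_eq_ncard_cliqueSet {V : Type*} (G : SimpleGraph V) :
    G.holeNumber = (G.cliqueSet 3).ncard :=
  rfl

theorem Iso.holeNumber_eq {V W : Type*} {G : SimpleGraph V} {H : SimpleGraph W} (φ : G ≃g H) :
    G.holeNumber = H.holeNumber := by
  have hH : G.map (φ : V ≃ W) = H := by
    change G.map (φ : V ≃ W).toEmbedding = H
    rw [← comap_symm]
    ext
    exact φ.symm.map_adj_iff
  rw [holeNumber_eq_ncard_cliqueSet, holeNumber_eq_ncard_cliqueSet]
  rw [← hH, cliqueSet_map_of_equiv, Set.ncard_image_of_injective _ (Finset.map_injective _)]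

def pathGraphSq (m : ℕ) : SimpleGraph (Fin m) :=
  fromRel fun a b => a < b ∧ (b : ℕ) ≤ a + 2

theorem pathGraphSq_adj {m : ℕ} {a b : Fin m} :
    (pathGraphSq m).Adj a b ↔ a ≠ b ∧ (a : ℕ) ≤ b + 2 ∧ (b : ℕ) ≤ a + 2 := by
  simp only [pathGraphSq, fromRel_adj, ne_eq, Fin.lt_def, Fin.ext_iff]
  omega

def pathGraphSqTriangle (m : ℕ) (k : Fin (m - 2)) : Finset (Fin m) :=
  {⟨k, by omega⟩, ⟨k + 1, by omega⟩, ⟨k + 2, by omega⟩}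

theorem mem_pathGraphSqTriangle {m : ℕ} {k : Fin (m - 2)} {x : Fin m} :
    x ∈ pathGraphSqTriangle m k ↔ (k : ℕ) ≤ x ∧ (x : ℕ) ≤ k + 2 := by
  simp only [pathGraphSqTriangle, Finset.mem_insert, Finset.mem_singleton, Fin.ext_iff]
  omega

theorem pathGraphSqTriangle_injective (m : ℕ) : (pathGraphSqTriangle m).Injective := by
  intro k l h
  have hk : (⟨k, by omega⟩ : Fin m) ∈ pathGraphSqTriangle m l :=
    h ▸ mem_pathGraphSqTriangle.2 (by simp)
  have hl : (⟨l, by omega⟩ : Fin m) ∈ pathGraphSqTriangle m k :=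
    h.symm ▸ mem_pathGraphSqTriangle.2 (by simp)
  simp only [mem_pathGraphSqTriangle] at hk hl
  exact Fin.ext (by omega)

theorem cliqueSet_three_pathGraphSq (m : ℕ) :
    (pathGraphSq m).cliqueSet 3 = Set.range (pathGraphSqTriangle m) := by
  ext s
  constructor
  · intro hs
    obtain ⟨a, b, c, hab, hac, hbc, rfl⟩ := is3Clique_iff.1 hs
    rw [pathGraphSq_adj, ne_eq, Fin.ext_iff] at hab hac hbc
    refine ⟨⟨min a (min b c), by omega⟩, ?_⟩
    ext x
    simp only [mem_pathGraphSqTriangle, Finset.mem_insert, Finset.mem_singleton, Fin.ext_iff]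
    omega
  · rintro ⟨k, rfl⟩
    refine is3Clique_triple_iff.2 ⟨?_, ?_, ?_⟩ <;>
      · simp only [pathGraphSq_adj, ne_eq, Fin.ext_iff]; omega

theorem holeNumber_pathGraphSq (m : ℕ) : (pathGraphSq m).holeNumber = m - 2 := by
  rw [holeNumber_eq_ncard_cliqueSet, cliqueSet_three_pathGraphSq, ← Set.image_univ,
    Set.ncard_image_of_injective _ (pathGraphSqTriangle_injective m), Set.ncard_univ,
    Nat.card_eq_fintype_card, Fintype.card_fin]

section TotalGraph

variable {V : Type*} {G : SimpleGraph V}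

@[simp]
theorem totalGraph_adj_inl_inl {u v : V} : G.totalGraph.Adj (.inl u) (.inl v) ↔ G.Adj u v :=
  Iff.rfl

@[simp]
theorem totalGraph_adj_inl_inr {u : V} {e : G.edgeSet} :
    G.totalGraph.Adj (.inl u) (.inr e) ↔ u ∈ (e : Sym2 V) :=
  Iff.rfl

@[simp]
theorem totalGraph_adj_inr_inl {e : G.edgeSet} {u : V} :
    G.totalGraph.Adj (.inr e) (.inl u) ↔ u ∈ (e : Sym2 V) :=
  Iff.rfl

@[simp]
theorem totalGraph_adj_inr_inr {e f : G.edgeSet} :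
    G.totalGraph.Adj (.inr e) (.inr f) ↔ e ≠ f ∧ ∃ v, v ∈ (e : Sym2 V) ∧ v ∈ (f : Sym2 V) :=
  Iff.rfl

end TotalGraph

section PathGraphEdge

variable {n : ℕ}

def pathGraphEdge (i : ℕ) (h : i + 1 < n) : (pathGraph n).edgeSet :=
  ⟨s(⟨i, by omega⟩, ⟨i + 1, h⟩), pathGraph_adj.2 (Or.inl rfl)⟩

theorem mem_pathGraphEdge {i : ℕ} {h : i + 1 < n} {v : Fin n} :
    v ∈ (pathGraphEdge i h : Sym2 (Fin n)) ↔ (v : ℕ) = i ∨ (v : ℕ) = i + 1 := by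
  simp [pathGraphEdge, Fin.ext_iff]

theorem pathGraphEdge_inj {i j : ℕ} {hi : i + 1 < n} {hj : j + 1 < n} :
    pathGraphEdge i hi = pathGraphEdge j hj ↔ i = j := by
  refine ⟨fun h => ?_, fun h => by subst h; rfl⟩
  have hmem : (⟨i, by omega⟩ : Fin n) ∈ (pathGraphEdge j hj : Sym2 (Fin n)) ∧
      (⟨i + 1, hi⟩ : Fin n) ∈ (pathGraphEdge j hj : Sym2 (Fin n)) := by
    simp only [← h, mem_pathGraphEdge, true_or, or_true, and_self]
  simp only [mem_pathGraphEdge] at hmem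
  omega

theorem exists_eq_pathGraphEdge (e : (pathGraph n).edgeSet) :
    ∃ i h, e = pathGraphEdge i h := by
  obtain ⟨e, he⟩ := e
  induction e using Sym2.ind with
  | _ u v =>
    rw [mem_edgeSet, pathGraph_adj] at he
    rcases he with he | he
    · exact ⟨u, he ▸ v.2, Subtype.ext (by simp [pathGraphEdge, he])⟩
    · exact ⟨v, he ▸ u.2, Subtype.ext (by simp [pathGraphEdge, he])⟩

theorem totalGraph_pathGraph_adj_pathGraphEdge {i j : ℕ} {hi : i + 1 < n} {hj : j + 1 < n} :
    (pathGraph n).totalGraph.Adj (.inr (pathGraphEdge i hi)) (.inr (pathGraphEdge j hj)) ↔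
      i + 1 = j ∨ j + 1 = i := by
  simp only [totalGraph_adj_inr_inr, ne_eq, pathGraphEdge_inj, mem_pathGraphEdge]
  constructor
  · rintro ⟨hij, v, hvi, hvj⟩
    omega
  · intro h
    exact ⟨by omega, ⟨max i j, by omega⟩, by simp only; omega, by simp only; omega⟩

end PathGraphEdge

def pathGraphTotalEnum (n : ℕ) (k : Fin (2 * n - 1)) : Fin n ⊕ (pathGraph n).edgeSet :=
  if h : (k : ℕ) % 2 = 0 then .inl ⟨k / 2, by omega⟩ else .inr (pathGraphEdge (k / 2) (by omega))

theorem pathGraphTotalEnum_injective (n : ℕ) : (pathGraphTotalEnum n).Injective := by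
  intro k l h
  unfold pathGraphTotalEnum at h
  split_ifs at h with hk hl hl
  · simp only [Sum.inl.injEq, Fin.mk.injEq] at h
    omega
  · simp only [Sum.inr.injEq, pathGraphEdge_inj] at h
    omega

theorem pathGraphTotalEnum_surjective (n : ℕ) : (pathGraphTotalEnum n).Surjective := by
  rintro (v | e)
  · refine ⟨⟨2 * v, by omega⟩, ?_⟩
    simp only [pathGraphTotalEnum]
    rw [dif_pos (by omega)]
    exact congrArg Sum.inl (Fin.ext (by simp))
  · obtain ⟨i, hi, rfl⟩ := exists_eq_pathGraphEdge e
    refine ⟨⟨2 * i + 1, by omega⟩, ?_⟩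
    simp only [pathGraphTotalEnum]
    rw [dif_neg (by omega), Sum.inr.injEq, pathGraphEdge_inj]
    omega

noncomputable def pathGraphSqIsoTotalGraph (n : ℕ) :
    pathGraphSq (2 * n - 1) ≃g (pathGraph n).totalGraph where
  toEquiv := .ofBijective _ ⟨pathGraphTotalEnum_injective n, pathGraphTotalEnum_surjective n⟩
  map_rel_iff' {k l} := by
    change (pathGraph n).totalGraph.Adj (pathGraphTotalEnum n k) (pathGraphTotalEnum n l) ↔ _
    simp only [pathGraphTotalEnum, pathGraphSq_adj, ne_eq, Fin.ext_iff]
    split_ifs <;>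
      simp only [totalGraph_adj_inl_inl, totalGraph_adj_inl_inr, totalGraph_adj_inr_inl,
        totalGraph_pathGraph_adj_pathGraphEdge, pathGraph_adj, mem_pathGraphEdge] <;>
      omega

end SimpleGraph

theorem holeNumber_totalGraph_pathGraph_general (n : ℕ) :
    (SimpleGraph.pathGraph n).totalGraph.holeNumber = 2 * n - 3 := by
  rw [← (SimpleGraph.pathGraphSqIsoTotalGraph n).holeNumber_eq, SimpleGraph.holeNumber_pathGraphSq]
  omega

/-- For `n > 2`, the total graph of the path `P_n` satisfies `h(T(P_n)) = 2n - 3`. -/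
theorem holeNumber_totalGraph_pathGraph (n : ℕ) (hn : 2 < n) :
    (SimpleGraph.pathGraph n).totalGraph.holeNumber = 2 * n - 3 :=
  holeNumber_totalGraph_pathGraph_general n
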